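/- arXiv:1904.10802 — 2 statements merged into one kernel-verified Lean document; each statement's English description precedes it below -/
import Mathlib

section
/- For all g ≥ 2, ∑_{i=0}^{g} C(g,i)·F_{2i−1} = ((5+√5)/2)^{g−1} + ((5−√5)/2)^{g−1}, where the i = 0 term uses F_{−1} = 1. -/
/-- Fibonacci numbers extended to integer index `-1` by `F_{-1} = 1`
(only indices `≥ -1` are used). -/
noncomputable def fibZ (k : ℤ) : ℝ :=
  if k = -1 then 1 else Nat.fib k.toNat

/-! By Binet's formula and `φψ = -1`, `√5 F_{2i-1} = φ ψ^{2i} - ψ φ^{2i}` (also for `i = 0`), so the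
binomial theorem turns `√5` times the sum into `φ (1 + ψ²)^g - ψ (1 + φ²)^g = φ (ψ + 2)^g - ψ (φ + 2)^g`.
Splitting off one factor, `φ (ψ + 2) = √5` and `ψ (φ + 2) = -√5`. -/

open Finset Real
open scoped goldenRatio

lemma fibZ_eq_intFib {k : ℤ} (hk : -1 ≤ k) : fibZ k = Int.fib k := by
  unfold fibZ
  split_ifs with h
  · simp [h]
  · lift k to ℕ using by omega
    simp

lemma sqrt_five_mul_fibZ_two_mul_sub_one (i : ℕ) :
    √5 * fibZ (2 * i - 1) = φ * ψ ^ (2 * i) - ψ * φ ^ (2 * i) := by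
  rw [fibZ_eq_intFib (by omega), coe_intFib_eq, mul_div_cancel₀ _ (by positivity),
    zpow_sub_one₀ goldenRatio_ne_zero, zpow_sub_one₀ goldenConj_ne_zero, inv_goldenRatio,
    inv_goldenConj, show (2 * i : ℤ) = (2 * i : ℕ) by norm_cast, zpow_natCast, zpow_natCast]
  ring

lemma sum_range_choose_mul_pow_two_mul {R : Type*} [CommSemiring R] (x : R) (n : ℕ) :
    ∑ i ∈ range (n + 1), (n.choose i : R) * x ^ (2 * i) = (x ^ 2 + 1) ^ n := by
  rw [add_pow]
  refine sum_congr rfl fun i _ => ?_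
  rw [one_pow, mul_one, pow_mul, mul_comm]

lemma sqrt_five_mul_sum_choose_mul_fibZ (g : ℕ) :
    √5 * ∑ i ∈ range (g + 1), (g.choose i : ℝ) * fibZ (2 * i - 1) =
      φ * (ψ + 2) ^ g - ψ * (φ + 2) ^ g := by
  calc √5 * ∑ i ∈ range (g + 1), (g.choose i : ℝ) * fibZ (2 * i - 1)
      = φ * ∑ i ∈ range (g + 1), (g.choose i : ℝ) * ψ ^ (2 * i)
          - ψ * ∑ i ∈ range (g + 1), (g.choose i : ℝ) * φ ^ (2 * i) := by
        rw [mul_sum, mul_sum, mul_sum, ← sum_sub_distrib]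
        refine sum_congr rfl fun i _ => ?_
        linear_combination (g.choose i : ℝ) * sqrt_five_mul_fibZ_two_mul_sub_one i
    _ = φ * (ψ + 2) ^ g - ψ * (φ + 2) ^ g := by
        rw [sum_range_choose_mul_pow_two_mul, sum_range_choose_mul_pow_two_mul, goldenConj_sq,
          goldenRatio_sq]
        ring

lemma goldenRatio_mul_goldenConj_add_two : φ * (ψ + 2) = √5 := by
  rw [mul_add, goldenRatio_mul_goldenConj, goldenRatio]
  ring

lemma goldenConj_mul_goldenRatio_add_two : ψ * (φ + 2) = -√5 := by
  rw [mul_add, goldenConj_mul_goldenRatio, goldenConj]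
  ring

lemma goldenRatio_add_two : φ + 2 = (5 + √5) / 2 := by
  rw [goldenRatio]
  ring

lemma goldenConj_add_two : ψ + 2 = (5 - √5) / 2 := by
  rw [goldenConj]
  ring

theorem stmt_3 (g : ℕ) (hg : 2 ≤ g) :
    ∑ i ∈ Finset.range (g + 1), (g.choose i : ℝ) * fibZ (2 * i - 1) =
      ((5 + Real.sqrt 5) / 2) ^ (g - 1) + ((5 - Real.sqrt 5) / 2) ^ (g - 1) := by
  obtain ⟨m, rfl⟩ : ∃ m, g = m + 1 := ⟨g - 1, by omega⟩
  apply mul_left_cancel₀ (show √5 ≠ 0 by positivity)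
  rw [sqrt_five_mul_sum_choose_mul_fibZ, Nat.add_sub_cancel, pow_succ', pow_succ', ← mul_assoc,
    ← mul_assoc, goldenRatio_mul_goldenConj_add_two, goldenConj_mul_goldenRatio_add_two,
    goldenRatio_add_two, goldenConj_add_two]
  ring
end

section
/- For all natural numbers m and g, ∑_{i=0}^{g} C(g,i)·F_{m+2i} = ∑_{i=0}^{g} C(g,i)·2^{g−i}·F_{m+i}. -/
/-!
On sequences satisfying the Fibonacci recurrence the shift operator `E` satisfies `E² = E + 1`,
so `(E² + 1)^g = (E + 2)^g`. Expanding both sides by the binomial theorem and evaluating at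
the Fibonacci sequence, at index `m`, gives the two sums.
-/

open Finset

variable (R : Type*) [CommSemiring R]

def fibLike : Submodule R (ℕ → R) where
  carrier := {f | ∀ n, f (n + 2) = f (n + 1) + f n}
  add_mem' {f g} hf hg n := by simp only [Pi.add_apply, hf n, hg n]; ring
  zero_mem' _ := by simp
  smul_mem' c f hf n := by simp only [Pi.smul_apply, hf n, smul_add]

namespace fibLike

variable {R}

def shift : Module.End R (fibLike R) where
  toFun f := ⟨fun n => f.1 (n + 1), fun n => f.2 (n + 1)⟩
  map_add' _ _ := rfl
  map_smul' _ _ := rfl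

lemma shift_pow_apply (k : ℕ) (f : fibLike R) (n : ℕ) :
    ((shift ^ k) f : ℕ → R) n = (f : ℕ → R) (n + k) := by
  induction k generalizing f with
  | zero => rfl
  | succ k ih => rw [pow_succ, Module.End.mul_apply, ih, ← add_assoc]; rfl

lemma shift_sq : (shift : Module.End R (fibLike R)) ^ 2 = shift + 1 := by
  ext f n
  exact (shift_pow_apply 2 f n).trans (f.2 n)

lemma shift_pow_add_algebraMap_pow_apply (k g : ℕ) (c : R) (f : fibLike R) (n : ℕ) :
    (((shift ^ k + algebraMap R _ c) ^ g) f : ℕ → R) n =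
      ∑ i ∈ range (g + 1), g.choose i * c ^ (g - i) * (f : ℕ → R) (n + k * i) := by
  rw [(Algebra.commute_algebraMap_right c _).add_pow]
  simp only [LinearMap.sum_apply, Submodule.coe_sum, Finset.sum_apply, Module.End.mul_apply,
    Module.End.natCast_apply, ← map_pow, Module.algebraMap_end_apply, ← pow_mul,
    shift_pow_apply, Submodule.coe_smul_of_tower, Pi.smul_apply, smul_eq_mul, nsmul_eq_mul,
    Pi.mul_apply, Pi.natCast_apply]
  exact sum_congr rfl fun i _ => by ring

end fibLike

theorem stmt_8 (m g : ℕ) :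
    ∑ i ∈ Finset.range (g + 1), g.choose i * Nat.fib (m + 2 * i) =
      ∑ i ∈ Finset.range (g + 1), g.choose i * 2 ^ (g - i) * Nat.fib (m + i) := by
  let fib : fibLike ℕ := ⟨Nat.fib, fun _ => Nat.fib_add_two.trans (add_comm _ _)⟩
  have hE : ((fibLike.shift : Module.End ℕ (fibLike ℕ)) ^ 2 + algebraMap ℕ _ 1) ^ g =
      (fibLike.shift ^ 1 + algebraMap ℕ _ 2) ^ g := by
    rw [fibLike.shift_sq, map_one, map_ofNat, pow_one, add_assoc, one_add_one_eq_two]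
  have hm := congrArg (fun T => (T fib : ℕ → ℕ) m) hE
  simp only [fibLike.shift_pow_add_algebraMap_pow_apply, Nat.cast_id, one_pow, mul_one,
    one_mul] at hm
  exact hm
end
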